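/- Let $\lambda_0 < 0 < \lambda_1$, $\alpha \in (0,1)$, and for each real $n > 1$ let $\zeta_n > 0$ be the unique solution of $\frac{1}{\lambda_1 - \lambda_0} n^{1-\alpha} e^{\lambda_1 t}(1 - e^{(\lambda_0 - \lambda_1)t}) = n$. Then $\zeta_n / \log n \to \alpha/\lambda_1$ as $n \to \infty$. -/

import Mathlib

open Real Filter

/-- the deterministic recurrence time satisfies `ζ_n / log n → α/λ₁`. -/
theorem stmt1 (lam0 lam1 alpha : ℝ) (h0 : lam0 < 0) (h1 : 0 < lam1)
    (halpha : alpha ∈ Set.Ioo (0 : ℝ) 1) (zeta : ℝ → ℝ)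
    (hzeta : ∀ n : ℝ, 1 < n → 0 < zeta n ∧
      (1 / (lam1 - lam0)) * n ^ ((1:ℝ) - alpha) * Real.exp (lam1 * zeta n) *
        (1 - Real.exp ((lam0 - lam1) * zeta n)) = n) :
    Tendsto (fun n : ℝ => zeta n / Real.log n) atTop (nhds (alpha / lam1)) := by
  obtain ⟨ha0, ha1⟩ := halpha
  have hL : (0:ℝ) < lam1 - lam0 := by linarith
  have hlam1 : lam1 ≠ 0 := ne_of_gt h1
  set g : ℝ → ℝ := fun n => Real.exp ((lam0 - lam1) * zeta n) with hg
  have hgn : ∀ n : ℝ, 1 < n → 0 < 1 - g n := by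
    intro n hn
    have hz := (hzeta n hn).1
    have : (lam0 - lam1) * zeta n < 0 := mul_neg_of_neg_of_pos (by linarith) hz
    have := Real.exp_lt_one_iff.mpr this
    simp only [hg]; linarith
  have hkey : ∀ n : ℝ, 1 < n →
      lam1 * zeta n + Real.log (1 - g n) = Real.log (lam1 - lam0) + alpha * Real.log n := by
    intro n hn
    obtain ⟨hz, heq⟩ := hzeta n hn
    have hn0 : (0:ℝ) < n := by linarith
    have h1g := hgn n hn
    have hnp : (0:ℝ) < n ^ ((1:ℝ) - alpha) := Real.rpow_pos_of_pos hn0 _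
    have hsum : n ^ ((1:ℝ) - alpha) * n ^ alpha = n := by
      rw [← Real.rpow_add hn0]; norm_num
    have hE : Real.exp (lam1 * zeta n) * (1 - g n) = (lam1 - lam0) * n ^ alpha := by
      apply mul_left_cancel₀ (ne_of_gt hnp)
      field_simp at heq
      simp only [hg]
      rw [mul_comm (zeta n) (lam0 - lam1)] at heq
      linear_combination heq - (lam1 - lam0) * hsum
    have := congrArg Real.log hE
    rw [Real.log_mul (Real.exp_ne_zero _) (ne_of_gt h1g), Real.log_exp,
      Real.log_mul (ne_of_gt hL) (ne_of_gt (Real.rpow_pos_of_pos hn0 alpha)),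
      Real.log_rpow hn0] at this
    linarith
  -- zeta tends to atTop
  have hlow : ∀ᶠ n : ℝ in atTop,
      (Real.log (lam1 - lam0) + alpha * Real.log n) / lam1 ≤ zeta n := by
    filter_upwards [eventually_gt_atTop 1] with n hn
    have h1g := hgn n hn
    have hle : Real.log (1 - g n) ≤ 0 := Real.log_nonpos (by linarith) (by simp [hg]; positivity)
    have := hkey n hn
    rw [div_le_iff₀ h1]
    nlinarith
  have hzetaTop : Tendsto zeta atTop atTop := by
    refine tendsto_atTop_mono' atTop hlow ?_
    apply Tendsto.atTop_div_const h1
    apply tendsto_atTop_add_const_left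
    exact Tendsto.const_mul_atTop ha0 Real.tendsto_log_atTop
  have hgTend : Tendsto g atTop (nhds 0) := by
    have h1 : Tendsto (fun n => (lam0 - lam1) * zeta n) atTop atBot := by
      have := Tendsto.const_mul_atTop hL hzetaTop
      have hneg : Tendsto (fun n => -((lam1 - lam0) * zeta n)) atTop atBot :=
        tendsto_neg_atTop_atBot.comp this
      refine hneg.congr fun n => by ring
    exact Real.tendsto_exp_atBot.comp h1
  have hlogTend : Tendsto (fun n => Real.log (1 - g n)) atTop (nhds 0) := by
    have h1g : Tendsto (fun n => 1 - g n) atTop (nhds 1) := by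
      simpa using (tendsto_const_nhds (x := (1:ℝ))).sub hgTend
    have := (Real.continuousAt_log (by norm_num : (1:ℝ) ≠ 0)).tendsto.comp h1g
    rw [Real.log_one] at this
    exact this
  -- rewrite zeta n / log n
  have heq : ∀ᶠ n : ℝ in atTop, alpha / lam1 +
      (Real.log (lam1 - lam0) - Real.log (1 - g n)) / (lam1 * Real.log n)
      = zeta n / Real.log n := by
    filter_upwards [eventually_gt_atTop 1] with n hn
    have hlog : Real.log n ≠ 0 := ne_of_gt (Real.log_pos hn)
    have hk := hkey n hn
    field_simp
    linear_combination (-1 : ℝ) * hk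
  refine Tendsto.congr' heq ?_
  have hd : Tendsto (fun n : ℝ => lam1 * Real.log n) atTop atTop :=
    Tendsto.const_mul_atTop h1 Real.tendsto_log_atTop
  have hnum : Tendsto (fun n : ℝ => Real.log (lam1 - lam0) - Real.log (1 - g n)) atTop
      (nhds (Real.log (lam1 - lam0))) := by
    simpa using (tendsto_const_nhds (x := Real.log (lam1 - lam0))).sub hlogTend
  have hzero := hnum.div_atTop hd
  simpa using (tendsto_const_nhds (x := alpha / lam1)).add hzero
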